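/- arXiv:1704.08077 — 2 statements merged into one kernel-verified Lean document; each statement's English description precedes it below -/
import Mathlib

section
/- Let G : [0,∞) → ℝ be convex, non-decreasing with G(0) = 0. If a ≤ b and c ≤ d are real numbers, then G(|a - c|) + G(|b - d|) ≤ G(|d - a|) + G(|b - c|). -/
/-!
Write `u = |d - a|`, `v = |b - c|` for the right-hand side and `x = |a - c|`, `y = |b - d|` for
the left. The ordering `a ≤ b`, `c ≤ d` gives `x + y ≤ u + v` and `max x y ≤ max u v`, i.e.
`(x, y)` is weakly submajorized by `(u, v)`, and a convex non-decreasing function preserves this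
order on sums: if `x, y ≤ v` but both `x, y > u`, move the pair `(x, y)` apart to
`(u, x + y - u)`, which only increases `G x + G y` by convexity, and then raise `x + y - u ≤ v`
to `v`.
-/

theorem ConvexOn.map_add_map_sub_le {𝕜 E β : Type*} [Ring 𝕜] [PartialOrder 𝕜]
    [AddCommGroup E] [Module 𝕜 E] [AddCommMonoid β] [PartialOrder β] [IsOrderedAddMonoid β]
    [Module 𝕜 β] {s : Set E} {f : E → β} (hf : ConvexOn 𝕜 s f) {p q x : E} (hp : p ∈ s)
    (hq : q ∈ s) (hx : x ∈ segment 𝕜 p q) : f x + f (p + q - x) ≤ f p + f q := by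
  obtain ⟨a, b, ha, hb, hab, rfl⟩ := hx
  have hsymm : p + q - (a • p + b • q) = b • p + a • q := by
    calc p + q - (a • p + b • q) = (a + b) • p + (a + b) • q - (a • p + b • q) := by
          rw [hab, one_smul, one_smul]
      _ = b • p + a • q := by simp only [add_smul]; abel
  calc f (a • p + b • q) + f (p + q - (a • p + b • q))
      ≤ (a • f p + b • f q) + (b • f p + a • f q) := by
        rw [hsymm]
        exact add_le_add (hf.2 hp hq ha hb hab) (hf.2 hp hq hb ha (by rwa [add_comm]))
    _ = f p + f q := by
        rw [add_add_add_comm, ← add_smul, ← add_smul, add_comm b a, hab, one_smul, one_smul]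

theorem ConvexOn.map_add_map_le_of_add_le_of_le_of_le {s : Set ℝ} {f : ℝ → ℝ}
    (hf : ConvexOn ℝ s f) (hmono : MonotoneOn f s) {x y u v : ℝ} (hx : x ∈ s) (hy : y ∈ s)
    (hu : u ∈ s) (hv : v ∈ s) (hxv : x ≤ v) (hyv : y ≤ v)
    (hsum : x + y ≤ u + v) : f x + f y ≤ f u + f v := by
  rcases le_or_gt x u with hxu | hux
  · exact add_le_add (hmono hx hu hxu) (hmono hy hv hyv)
  rcases le_or_gt y u with hyu | huy
  · rw [add_comm (f u)]
    exact add_le_add (hmono hx hv hxv) (hmono hy hu hyu)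
  have hz : x + y - u ∈ s := hf.1.ordConnected.out hx hv ⟨by linarith, by linarith⟩
  calc f x + f y = f x + f (u + (x + y - u) - x) := by ring_nf
    _ ≤ f u + f (x + y - u) := by
        refine hf.map_add_map_sub_le hu hz ?_
        rw [segment_eq_Icc (by linarith)]
        exact ⟨hux.le, by linarith⟩
    _ ≤ f u + f v := add_le_add le_rfl (hmono hz hv (by linarith))

theorem ConvexOn.map_add_map_le_of_add_le_of_max_le {s : Set ℝ} {f : ℝ → ℝ}
    (hf : ConvexOn ℝ s f) (hmono : MonotoneOn f s) {x y u v : ℝ} (hx : x ∈ s) (hy : y ∈ s)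
    (hu : u ∈ s) (hv : v ∈ s) (hsum : x + y ≤ u + v) (hmax : max x y ≤ max u v) :
    f x + f y ≤ f u + f v := by
  obtain ⟨hxM, hyM⟩ := max_le_iff.mp hmax
  rcases le_total u v with huv | hvu
  · rw [max_eq_right huv] at hxM hyM
    exact hf.map_add_map_le_of_add_le_of_le_of_le hmono hx hy hu hv hxM hyM hsum
  · rw [max_eq_left hvu] at hxM hyM
    rw [add_comm (f u)]
    exact hf.map_add_map_le_of_add_le_of_le_of_le hmono hx hy hv hu hxM hyM
      (by linarith)

theorem abs_sub_add_abs_sub_le {a b c d : ℝ} (hab : a ≤ b) (hcd : c ≤ d) :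
    |a - c| + |b - d| ≤ |d - a| + |b - c| := by
  rcases abs_cases (a - c) with ⟨h₁, -⟩ | ⟨h₁, -⟩ <;>
  rcases abs_cases (b - d) with ⟨h₂, -⟩ | ⟨h₂, -⟩ <;>
  linarith [le_abs_self (d - a), le_abs_self (b - c), neg_le_abs (d - a), neg_le_abs (b - c)]

theorem max_abs_sub_le_max_abs_sub {a b c d : ℝ} (hab : a ≤ b) (hcd : c ≤ d) :
    max |a - c| |b - d| ≤ max |d - a| |b - c| := by
  have hu := (le_abs_self (d - a)).trans (le_max_left |d - a| |b - c|)
  have hv := (le_abs_self (b - c)).trans (le_max_right |d - a| |b - c|)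
  exact max_le (abs_le.mpr ⟨by linarith, by linarith⟩) (abs_le.mpr ⟨by linarith, by linarith⟩)

theorem young_two_point_ineq_general (G : ℝ → ℝ)
    (hGmono : MonotoneOn G (Set.Ici 0)) (hGconv : ConvexOn ℝ (Set.Ici 0) G)
    (a b c d : ℝ) (hab : a ≤ b) (hcd : c ≤ d) :
    G |a - c| + G |b - d| ≤ G |d - a| + G |b - c| :=
  hGconv.map_add_map_le_of_add_le_of_max_le hGmono (abs_nonneg (a - c)) (abs_nonneg (b - d))
    (abs_nonneg (d - a)) (abs_nonneg (b - c)) (abs_sub_add_abs_sub_le hab hcd)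
    (max_abs_sub_le_max_abs_sub hab hcd)

theorem young_two_point_ineq (G : ℝ → ℝ) (hG0 : G 0 = 0)
    (hGmono : MonotoneOn G (Set.Ici 0)) (hGconv : ConvexOn ℝ (Set.Ici 0) G)
    (a b c d : ℝ) (hab : a ≤ b) (hcd : c ≤ d) :
    G |a - c| + G |b - d| ≤ G |d - a| + G |b - c| :=
  young_two_point_ineq_general G hGmono hGconv a b c d hab hcd
end

section
/- Let H ⊆ ℝ^N be a closed half-space with reflection σ_H, u : ℝ^N → ℝ⁺ measurable, G : [0,∞) → ℝ a Young function (convex, non-decreasing, G(0)=0), and w : [0,∞) → [0,∞) non-increasing. Then ∫∫_{ℝ^N×ℝ^N} G(|u^H(x) − u^H(y)|) w(|x−y|) dx dy ≤ ∫∫_{ℝ^N×ℝ^N} G(|u(x) − u(y)|) w(|x−y|) dx dy (Riesz two-point inequality for polarization). -/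
open MeasureTheory Set Function
open scoped ENNReal RealInnerProductSpace

/-! With `S = {c < ⟪x, e⟫}` and `σ` the reflection, `S`, `σ S` and a null hyperplane partition
the space, so the double integral over `ℝᴺ × ℝᴺ` folds into `∫_S ∫_S` of the four terms at
`(x, y), (x, σ y), (σ x, y), (σ x, σ y)`. For `x, y ∈ S` polarization sorts the pairs
`{u x, u (σ x)}` and `{u y, u (σ y)}` decreasingly, while `‖x - y‖ ≤ ‖x - σ y‖` puts the larger
weight `w` on the aligned pairs; since `t ↦ G |t|` is convex it has increasing differences, and
sorting can then only lower the four-term sum. -/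

theorem ConvexOn.map_add_map_le_of_mem_Icc {s : Set ℝ} {g : ℝ → ℝ} (hg : ConvexOn ℝ s g)
    {x₁ x₂ y₁ y₂ : ℝ} (hy₁ : y₁ ∈ s) (hy₂ : y₂ ∈ s) (hx : x₁ ∈ Icc y₂ y₁)
    (hsum : x₁ + x₂ = y₁ + y₂) : g x₁ + g x₂ ≤ g y₁ + g y₂ := by
  obtain ⟨hlo, hhi⟩ := hx
  rcases (hlo.trans hhi).eq_or_lt with hy | hy
  · obtain rfl : x₁ = y₁ := le_antisymm hhi (hy ▸ hlo)
    obtain rfl : x₂ = y₂ := by linarith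
    rfl
  -- `x₁` and `x₂` are the convex combinations of `y₁, y₂` with swapped weights `t, 1 - t`.
  set t := (x₁ - y₂) / (y₁ - y₂)
  have ht : t * (y₁ - y₂) = x₁ - y₂ := div_mul_cancel₀ _ (sub_pos.2 hy).ne'
  have ht₀ : 0 ≤ t := div_nonneg (sub_nonneg.2 hlo) (sub_pos.2 hy).le
  have ht₁ : 0 ≤ 1 - t := by
    rw [sub_nonneg, div_le_one (sub_pos.2 hy)]; linarith
  have h₁ : g x₁ ≤ t * g y₁ + (1 - t) * g y₂ := by
    simpa only [smul_eq_mul, show t * y₁ + (1 - t) * y₂ = x₁ by linarith]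
      using hg.2 hy₁ hy₂ ht₀ ht₁ (by ring)
  have h₂ : g x₂ ≤ (1 - t) * g y₁ + t * g y₂ := by
    simpa only [smul_eq_mul, show (1 - t) * y₁ + t * y₂ = x₂ by linarith]
      using hg.2 hy₁ hy₂ ht₁ ht₀ (by ring)
  linarith

theorem ConvexOn.map_sub_add_map_sub_le {φ : ℝ → ℝ} (hφ : ConvexOn ℝ univ φ) {a b p q : ℝ}
    (hab : b ≤ a) (hpq : p ≤ q) : φ (a - q) + φ (b - p) ≤ φ (a - p) + φ (b - q) :=
  hφ.map_add_map_le_of_mem_Icc (mem_univ _) (mem_univ _)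
    ⟨by linarith, by linarith⟩ (by ring)

theorem ConvexOn.four_point_max_min_le {φ : ℝ → ℝ} (hφ : ConvexOn ℝ univ φ)
    (a b p q : ℝ) {w₁ w₂ : ℝ} (hw : w₂ ≤ w₁) :
    φ (max a b - max p q) * w₁ + φ (max a b - min p q) * w₂ +
        φ (min a b - max p q) * w₂ + φ (min a b - min p q) * w₁ ≤
      φ (a - p) * w₁ + φ (a - q) * w₂ + φ (b - p) * w₂ + φ (b - q) * w₁ := by
  -- In the two crossed cases the sides differ by `(w₁ - w₂)` times the quadrangle inequality.
  rcases le_total b a with hba | hab <;> rcases le_total p q with hpq | hqp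
  · simp only [max_eq_left hba, min_eq_right hba, max_eq_right hpq, min_eq_left hpq]
    nlinarith [hφ.map_sub_add_map_sub_le hba hpq]
  · simp only [max_eq_left hba, min_eq_right hba, max_eq_left hqp, min_eq_right hqp]
    rfl
  · simp only [max_eq_right hab, min_eq_left hab, max_eq_right hpq, min_eq_left hpq]
    linarith
  · simp only [max_eq_right hab, min_eq_left hab, max_eq_left hqp, min_eq_right hqp]
    nlinarith [hφ.map_sub_add_map_sub_le hab hqp]

theorem ConvexOn.comp_abs {G : ℝ → ℝ} (hconv : ConvexOn ℝ (Ici 0) G)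
    (hmono : MonotoneOn G (Ici 0)) : ConvexOn ℝ univ fun t => G |t| := by
  have himage : (norm : ℝ → ℝ) '' univ = Ici 0 := by
    ext t
    simp only [image_univ, mem_range, Real.norm_eq_abs, mem_Ici]
    exact ⟨fun ⟨y, hy⟩ => hy ▸ abs_nonneg y, fun ht => ⟨t, abs_of_nonneg ht⟩⟩
  exact (himage ▸ hconv).comp convexOn_univ_norm (himage ▸ hmono)

theorem ENNReal.ofReal_add_four_le {a b c d a' b' c' d' : ℝ} (ha : 0 ≤ a) (hb : 0 ≤ b)
    (hc : 0 ≤ c) (hd : 0 ≤ d) (h : a + b + c + d ≤ a' + b' + c' + d') :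
    ENNReal.ofReal a + ENNReal.ofReal b + ENNReal.ofReal c + ENNReal.ofReal d ≤
      ENNReal.ofReal a' + ENNReal.ofReal b' + ENNReal.ofReal c' + ENNReal.ofReal d' := by
  rw [← ENNReal.ofReal_add ha hb, ← ENNReal.ofReal_add (by positivity) hc,
    ← ENNReal.ofReal_add (by positivity) hd]
  calc ENNReal.ofReal (a + b + c + d) ≤ ENNReal.ofReal (a' + b' + c' + d') :=
        ENNReal.ofReal_le_ofReal h
    _ ≤ _ := by
      grw [ENNReal.ofReal_add_le, ENNReal.ofReal_add_le, ENNReal.ofReal_add_le]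

namespace MeasureTheory.MeasurePreserving

variable {α : Type*} [MeasurableSpace α] {μ : Measure α} {σ : α → α} {S : Set α}

theorem lintegral_eq_setLIntegral_add_comp (hσ : MeasurePreserving σ μ μ)
    (hinv : Involutive σ) (hS : MeasurableSet S) (hdisj : Disjoint S (σ ⁻¹' S))
    (hnull : μ (S ∪ σ ⁻¹' S)ᶜ = 0) {g : α → ℝ≥0∞} (hg : Measurable g) :
    ∫⁻ z, g z ∂μ = ∫⁻ z in S, (g z + g (σ z)) ∂μ := by
  have hσS : MeasurableSet (σ ⁻¹' S) := hσ.measurable hS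
  calc ∫⁻ z, g z ∂μ = ∫⁻ z in S ∪ σ ⁻¹' S, g z ∂μ := by
        rw [Measure.restrict_eq_self_of_ae_mem (s := S ∪ σ ⁻¹' S) (mem_ae_iff.mpr hnull)]
    _ = ∫⁻ z in S, g z ∂μ + ∫⁻ z in σ ⁻¹' (σ ⁻¹' S), g (σ z) ∂μ := by
        rw [lintegral_union hσS hdisj, hσ.setLIntegral_comp_preimage hσS hg]
    _ = ∫⁻ z in S, (g z + g (σ z)) ∂μ := by
        rw [hinv.preimage S, lintegral_add_left hg]

theorem lintegral_lintegral_eq_setLIntegral_setLIntegral [SFinite μ]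
    (hσ : MeasurePreserving σ μ μ) (hinv : Involutive σ) (hS : MeasurableSet S)
    (hdisj : Disjoint S (σ ⁻¹' S)) (hnull : μ (S ∪ σ ⁻¹' S)ᶜ = 0) {F : α → α → ℝ≥0∞}
    (hF : Measurable (uncurry F)) :
    ∫⁻ x, ∫⁻ y, F x y ∂μ ∂μ =
      ∫⁻ x in S, ∫⁻ y in S, (F x y + F x (σ y) + F (σ x) y + F (σ x) (σ y)) ∂μ ∂μ := by
  have hFx (x : α) : Measurable (F x) := hF.comp measurable_prodMk_left
  have hFσ : Measurable (uncurry fun x y => F x y + F x (σ y)) :=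
    hF.add (hF.comp (measurable_fst.prodMk (hσ.measurable.comp measurable_snd)))
  calc ∫⁻ x, ∫⁻ y, F x y ∂μ ∂μ = ∫⁻ x, ∫⁻ y in S, (F x y + F x (σ y)) ∂μ ∂μ := by
        simp_rw [hσ.lintegral_eq_setLIntegral_add_comp hinv hS hdisj hnull (hFx _)]
    _ = ∫⁻ x in S, (∫⁻ y in S, (F x y + F x (σ y)) ∂μ +
          ∫⁻ y in S, (F (σ x) y + F (σ x) (σ y)) ∂μ) ∂μ :=
        hσ.lintegral_eq_setLIntegral_add_comp hinv hS hdisj hnull hFσ.lintegral_prod_right'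
    _ = _ := by
        refine setLIntegral_congr_fun hS fun x _ => ?_
        rw [← lintegral_add_left (f := fun y => F x y + F x (σ y))
          ((hFx x).add ((hFx x).comp hσ.measurable))]
        simp only [add_assoc]

end MeasureTheory.MeasurePreserving

section EnergyDensity

variable {E : Type*} [NormedAddCommGroup E]

noncomputable def nonlocalEnergyDensity (φ w : ℝ → ℝ) (v : E → ℝ) (x y : E) : ℝ≥0∞ :=
  ENNReal.ofReal (φ (v x - v y) * w ‖x - y‖)

variable [MeasurableSpace E] [BorelSpace E]

theorem AntitoneOn.measurable_comp_norm {w : ℝ → ℝ} (hw : AntitoneOn w (Ici 0)) :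
    Measurable fun z : E => w ‖z‖ := by
  have hanti : Antitone fun t => w (max t 0) := fun s t hst =>
    hw (mem_Ici.2 (le_max_right _ _)) (mem_Ici.2 (le_max_right _ _)) (max_le_max_right 0 hst)
  simpa only [comp_def, max_eq_left (norm_nonneg _)] using
    hanti.measurable.comp (measurable_norm (α := E))

theorem measurable_nonlocalEnergyDensity [SecondCountableTopology E] {φ w : ℝ → ℝ}
    (hφ : Measurable φ) (hw : Measurable fun z : E => w ‖z‖) {v : E → ℝ} (hv : Measurable v) :
    Measurable (uncurry (nonlocalEnergyDensity φ w v)) :=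
  ((hφ.comp ((hv.comp measurable_fst).sub (hv.comp measurable_snd))).mul
    (hw.comp (measurable_fst.sub measurable_snd))).ennreal_ofReal

end EnergyDensity

section HalfSpace

variable {E : Type*} [NormedAddCommGroup E] [InnerProductSpace ℝ E] {e : E} {c : ℝ}

noncomputable def halfSpaceReflection (e : E) (c : ℝ) (x : E) : E := x - (2 * (⟪x, e⟫ - c)) • e

noncomputable def polarization (e : E) (c : ℝ) (u : E → ℝ) (x : E) : ℝ :=
  if c ≤ ⟪x, e⟫ then max (u x) (u (halfSpaceReflection e c x))
  else min (u x) (u (halfSpaceReflection e c x))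

theorem inner_halfSpaceReflection (he : ‖e‖ = 1) (x : E) :
    ⟪halfSpaceReflection e c x, e⟫ = 2 * c - ⟪x, e⟫ := by
  rw [halfSpaceReflection, inner_sub_left, real_inner_smul_left, real_inner_self_eq_norm_sq, he]
  ring

theorem halfSpaceReflection_involutive (he : ‖e‖ = 1) :
    Involutive (halfSpaceReflection e c) := by
  intro x
  rw [halfSpaceReflection, inner_halfSpaceReflection he, halfSpaceReflection]
  module

theorem halfSpaceReflection_eq_reflection_add (he : ‖e‖ = 1) (x : E) :
    halfSpaceReflection e c x = (ℝ ∙ e)ᗮ.reflection x + (2 * c) • e := by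
  rw [Submodule.reflection_orthogonal_apply, Submodule.reflection_singleton_apply, he,
    halfSpaceReflection, real_inner_comm]
  module

theorem continuous_halfSpaceReflection : Continuous (halfSpaceReflection e c) := by
  unfold halfSpaceReflection; fun_prop

theorem norm_halfSpaceReflection_sub_halfSpaceReflection (he : ‖e‖ = 1) (x y : E) :
    ‖halfSpaceReflection e c x - halfSpaceReflection e c y‖ = ‖x - y‖ := by
  rw [halfSpaceReflection_eq_reflection_add he, halfSpaceReflection_eq_reflection_add he,
    add_sub_add_right_eq_sub, ← map_sub, LinearIsometryEquiv.norm_map]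

theorem norm_halfSpaceReflection_sub (he : ‖e‖ = 1) (x y : E) :
    ‖halfSpaceReflection e c x - y‖ = ‖x - halfSpaceReflection e c y‖ := by
  conv_lhs => rw [← halfSpaceReflection_involutive (c := c) he y]
  rw [norm_halfSpaceReflection_sub_halfSpaceReflection he]

theorem norm_sub_halfSpaceReflection_sq (he : ‖e‖ = 1) (x y : E) :
    ‖x - halfSpaceReflection e c y‖ ^ 2 = ‖x - y‖ ^ 2 + 4 * (⟪x, e⟫ - c) * (⟪y, e⟫ - c) := by
  have hxy : x - halfSpaceReflection e c y = (x - y) + (2 * (⟪y, e⟫ - c)) • e := by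
    rw [halfSpaceReflection]; abel
  rw [hxy, norm_add_sq_real, real_inner_smul_right, inner_sub_left, norm_smul, he,
    Real.norm_eq_abs, mul_one, sq_abs]
  ring

theorem norm_sub_le_norm_sub_halfSpaceReflection (he : ‖e‖ = 1) {x y : E} (hx : c ≤ ⟪x, e⟫)
    (hy : c ≤ ⟪y, e⟫) : ‖x - y‖ ≤ ‖x - halfSpaceReflection e c y‖ := by
  refine (pow_le_pow_iff_left₀ (norm_nonneg _) (norm_nonneg _) two_ne_zero).1 ?_
  rw [norm_sub_halfSpaceReflection_sq he]
  nlinarith [mul_nonneg (sub_nonneg.2 hx) (sub_nonneg.2 hy)]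

theorem polarization_of_le (u : E → ℝ) {x : E} (hx : c ≤ ⟪x, e⟫) :
    polarization e c u x = max (u x) (u (halfSpaceReflection e c x)) :=
  if_pos hx

theorem polarization_halfSpaceReflection (he : ‖e‖ = 1) (u : E → ℝ) {x : E}
    (hx : c < ⟪x, e⟫) :
    polarization e c u (halfSpaceReflection e c x) = min (u x) (u (halfSpaceReflection e c x)) := by
  rw [polarization, if_neg (by rw [inner_halfSpaceReflection he]; linarith),
    halfSpaceReflection_involutive he, min_comm]

theorem measurable_polarization [MeasurableSpace E] [BorelSpace E] {u : E → ℝ}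
    (hu : Measurable u) : Measurable (polarization e c u) :=
  have hσ := continuous_halfSpaceReflection (e := e) (c := c) |>.measurable
  Measurable.ite (measurableSet_le measurable_const (by fun_prop))
    (hu.max (hu.comp hσ)) (hu.min (hu.comp hσ))

theorem nonlocalEnergyDensity_polarization_le (he : ‖e‖ = 1) {φ w : ℝ → ℝ}
    (hφ : ConvexOn ℝ univ φ) (hφ0 : ∀ t, 0 ≤ φ t) (hw0 : ∀ r, 0 ≤ r → 0 ≤ w r)
    (hwa : AntitoneOn w (Ici 0)) (u : E → ℝ) {x y : E} (hx : c < ⟪x, e⟫) (hy : c < ⟪y, e⟫) :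
    nonlocalEnergyDensity φ w (polarization e c u) x y +
        nonlocalEnergyDensity φ w (polarization e c u) x (halfSpaceReflection e c y) +
        nonlocalEnergyDensity φ w (polarization e c u) (halfSpaceReflection e c x) y +
        nonlocalEnergyDensity φ w (polarization e c u) (halfSpaceReflection e c x)
          (halfSpaceReflection e c y) ≤
      nonlocalEnergyDensity φ w u x y +
        nonlocalEnergyDensity φ w u x (halfSpaceReflection e c y) +
        nonlocalEnergyDensity φ w u (halfSpaceReflection e c x) y +
        nonlocalEnergyDensity φ w u (halfSpaceReflection e c x) (halfSpaceReflection e c y) := by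
  simp only [nonlocalEnergyDensity]
  rw [polarization_halfSpaceReflection he u hx, polarization_halfSpaceReflection he u hy,
    polarization_of_le u hx.le, polarization_of_le u hy.le, norm_halfSpaceReflection_sub he,
    norm_halfSpaceReflection_sub_halfSpaceReflection he]
  have hw₁ := hw0 _ (norm_nonneg (x - y))
  have hw₂ := hw0 _ (norm_nonneg (x - halfSpaceReflection e c y))
  have hw : w ‖x - halfSpaceReflection e c y‖ ≤ w ‖x - y‖ :=
    hwa (norm_nonneg _) (norm_nonneg _) (norm_sub_le_norm_sub_halfSpaceReflection he hx.le hy.le)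
  exact ENNReal.ofReal_add_four_le (mul_nonneg (hφ0 _) hw₁) (mul_nonneg (hφ0 _) hw₂)
    (mul_nonneg (hφ0 _) hw₂) (mul_nonneg (hφ0 _) hw₁) (hφ.four_point_max_min_le _ _ _ _ hw)

variable [FiniteDimensional ℝ E] [MeasurableSpace E] [BorelSpace E]

theorem measurePreserving_halfSpaceReflection (he : ‖e‖ = 1) :
    MeasurePreserving (halfSpaceReflection e c) :=
  have : halfSpaceReflection e c = (· + (2 * c) • e) ∘ (ℝ ∙ e)ᗮ.reflection :=
    funext (halfSpaceReflection_eq_reflection_add he)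
  this ▸ (measurePreserving_add_right volume _).comp (ℝ ∙ e)ᗮ.reflection.measurePreserving

theorem volume_setOf_inner_eq (he : e ≠ 0) (c : ℝ) : volume {x : E | ⟪x, e⟫ = c} = 0 := by
  have hset : {x : E | ⟪x, e⟫ = c} = (· + -(c / ‖e‖ ^ 2) • e) ⁻¹' (ℝ ∙ e)ᗮ := by
    ext x
    simp only [mem_ofPred_eq, mem_preimage, SetLike.mem_coe,
      Submodule.mem_orthogonal_singleton_iff_inner_right, inner_add_right,
      real_inner_smul_right, real_inner_self_eq_norm_sq, real_inner_comm e x]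
    field_simp
    constructor <;> intro h <;> linarith
  rw [hset, measure_preimage_add_right]
  refine Measure.addHaar_submodule volume _ fun htop => he ?_
  rwa [Submodule.orthogonal_eq_top_iff, Submodule.span_singleton_eq_bot] at htop

theorem lintegral_lintegral_eq_setLIntegral_halfSpace (he : ‖e‖ = 1) {F : E → E → ℝ≥0∞}
    (hF : Measurable (uncurry F)) :
    ∫⁻ x, ∫⁻ y, F x y = ∫⁻ x in {x | c < ⟪x, e⟫}, ∫⁻ y in {y | c < ⟪y, e⟫},
      (F x y + F x (halfSpaceReflection e c y) + F (halfSpaceReflection e c x) y +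
        F (halfSpaceReflection e c x) (halfSpaceReflection e c y)) := by
  have hpre : halfSpaceReflection e c ⁻¹' {x | c < ⟪x, e⟫} = {x | ⟪x, e⟫ < c} := by
    ext x
    simp only [mem_preimage, mem_ofPred_eq, inner_halfSpaceReflection he]
    constructor <;> intro h <;> linarith
  refine (measurePreserving_halfSpaceReflection he).lintegral_lintegral_eq_setLIntegral_setLIntegral
    (halfSpaceReflection_involutive he) (measurableSet_lt measurable_const (by fun_prop)) ?_ ?_ hF
  · rw [hpre]
    exact disjoint_left.2 fun x (h₁ : c < _) (h₂ : _ < c) => (h₁.trans h₂).false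
  · have hne : e ≠ 0 := by rintro rfl; simp at he
    convert volume_setOf_inner_eq hne c using 2
    ext x
    simp only [hpre, mem_compl_iff, mem_union, mem_ofPred_eq, not_or, not_lt]
    exact ⟨fun ⟨h₁, h₂⟩ => le_antisymm h₁ h₂, fun h => ⟨h.le, h.ge⟩⟩

end HalfSpace

theorem riesz_two_point_inequality_general (N : ℕ) (e : EuclideanSpace ℝ (Fin N)) (he : ‖e‖ = 1)
    (c : ℝ)
    (u : EuclideanSpace ℝ (Fin N) → ℝ) (humeas : Measurable u)
    (σ : EuclideanSpace ℝ (Fin N) → EuclideanSpace ℝ (Fin N))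
    (hσ : ∀ x, σ x = x - (2 * ((inner ℝ x e : ℝ) - c)) • e)
    (uH : EuclideanSpace ℝ (Fin N) → ℝ)
    (huH : ∀ x, uH x = if c ≤ (inner ℝ x e : ℝ) then max (u x) (u (σ x))
      else min (u x) (u (σ x)))
    (G : ℝ → ℝ) (hG0 : G 0 = 0) (hGmono : MonotoneOn G (Set.Ici 0))
    (hGconv : ConvexOn ℝ (Set.Ici 0) G)
    (w : ℝ → ℝ) (hw0 : ∀ r : ℝ, 0 ≤ r → 0 ≤ w r) (hwa : AntitoneOn w (Set.Ici 0)) :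
    ∫⁻ x, ∫⁻ y, ENNReal.ofReal (G |uH x - uH y| * w ‖x - y‖) ≤
      ∫⁻ x, ∫⁻ y, ENNReal.ofReal (G |u x - u y| * w ‖x - y‖) := by
  obtain rfl : σ = halfSpaceReflection e c := funext hσ
  obtain rfl : uH = polarization e c u := funext huH
  have hφ : ConvexOn ℝ univ fun t => G |t| := hGconv.comp_abs hGmono
  have hφ0 (t : ℝ) : 0 ≤ G |t| := hG0 ▸ hGmono self_mem_Ici (abs_nonneg t) (abs_nonneg t)
  have hD {v : EuclideanSpace ℝ (Fin N) → ℝ} (hv : Measurable v) :=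
    measurable_nonlocalEnergyDensity
      (continuousOn_univ.1 (hφ.continuousOn isOpen_univ)).measurable
      hwa.measurable_comp_norm hv
  change ∫⁻ x, ∫⁻ y, nonlocalEnergyDensity (fun t => G |t|) w (polarization e c u) x y ≤
    ∫⁻ x, ∫⁻ y, nonlocalEnergyDensity (fun t => G |t|) w u x y
  rw [lintegral_lintegral_eq_setLIntegral_halfSpace he (hD (measurable_polarization humeas)),
    lintegral_lintegral_eq_setLIntegral_halfSpace he (hD humeas)]
  have hS : MeasurableSet {x : EuclideanSpace ℝ (Fin N) | c < ⟪x, e⟫} :=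
    measurableSet_lt measurable_const (by fun_prop)
  exact setLIntegral_mono' hS fun x hx => setLIntegral_mono' hS fun y hy =>
    nonlocalEnergyDensity_polarization_le he hφ hφ0 hw0 hwa u hx hy

/-- Riesz two-point inequality: polarization does not increase the nonlocal energy
`∬ G(|u(x) - u(y)|) w(|x - y|) dx dy` for a Young function `G` and a nonnegative
non-increasing kernel `w`. `H = {x : ⟪x, e⟫ ≥ c}` with `0 ∈ H`, `σ` the reflection. -/
theorem riesz_two_point_inequality (N : ℕ) (e : EuclideanSpace ℝ (Fin N)) (he : ‖e‖ = 1)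
    (c : ℝ) (hc : c ≤ 0)
    (u : EuclideanSpace ℝ (Fin N) → ℝ) (hu : ∀ x, 0 ≤ u x) (humeas : Measurable u)
    (σ : EuclideanSpace ℝ (Fin N) → EuclideanSpace ℝ (Fin N))
    (hσ : ∀ x, σ x = x - (2 * ((inner ℝ x e : ℝ) - c)) • e)
    (uH : EuclideanSpace ℝ (Fin N) → ℝ)
    (huH : ∀ x, uH x = if c ≤ (inner ℝ x e : ℝ) then max (u x) (u (σ x))
      else min (u x) (u (σ x)))
    (G : ℝ → ℝ) (hG0 : G 0 = 0) (hGmono : MonotoneOn G (Set.Ici 0))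
    (hGconv : ConvexOn ℝ (Set.Ici 0) G)
    (w : ℝ → ℝ) (hw0 : ∀ r : ℝ, 0 ≤ r → 0 ≤ w r) (hwa : AntitoneOn w (Set.Ici 0)) :
    ∫⁻ x, ∫⁻ y, ENNReal.ofReal (G |uH x - uH y| * w ‖x - y‖) ≤
      ∫⁻ x, ∫⁻ y, ENNReal.ofReal (G |u x - u y| * w ‖x - y‖) :=
  riesz_two_point_inequality_general N e he c u humeas σ hσ uH huH G hG0 hGmono hGconv w hw0 hwa
end
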